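/- Let A1, ..., A_{n+1} be affinely independent points in ℝ^n, P a point with barycentric coordinates p_i ≠ 0, and S the unit sphere centered at P. Let A_i* be the S-pole of the sideplane h_i opposite A_i. For a point Z* ≠ P with barycentric coordinates z_1*, ..., z_{n+1}* with respect to (A_1*,...,A_{n+1}*), the polar hyperplane of Z* with respect to S meets the line A_1A_2 at the point with homogeneous barycentric coordinates [p_1/z_1* : -p_2/z_2* : 0 : ... : 0] with respect to (A_1,...,A_{n+1}), provided z_1*, z_2* ≠ 0 and p_1/z_1* ≠ p_2/z_2*. -/

import Mathlib

/-!
Polarity gives `⟪Aⱼ - P, Aᵢ* - P⟫ = 1` whenever `j ≠ i`, since `Aⱼ` lies on the sideplane `hᵢ`.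
Pairing `∑ⱼ pⱼ (Aⱼ - P) = 0` with `Aᵢ* - P` then forces the diagonal value `1 - 1/pᵢ`, so
`⟪Aⱼ - P, Z* - P⟫ = 1 - zⱼ*/pⱼ`. Along the line `A₁A₂` the polar equation of `Z*` is therefore
linear in the line parameter, with the unique solution `[p₁/z₁* : -p₂/z₂*]`.
-/

open Finset RealInnerProductSpace

lemma sum_smul_sub_of_sum_eq_one {ι R E : Type*} [Fintype ι] [Ring R] [AddCommGroup E]
    [Module R E] {w : ι → R} (hw : ∑ i, w i = 1) (v : ι → E) (Q : E) :
    ∑ i, w i • (v i - Q) = ∑ i, w i • v i - Q := by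
  simp only [smul_sub, sum_sub_distrib, ← sum_smul, hw, one_smul]

lemma sum_mul_eq_of_forall_ne_eq_one {ι R : Type*} [Fintype ι] [CommRing R] {c f : ι → R}
    (i : ι) (hf : ∀ j, j ≠ i → f j = 1) :
    ∑ j, c j * f j = ∑ j, c j + c i * (f i - 1) := by
  have hdiff : ∑ j, c j * (f j - 1) = c i * (f i - 1) :=
    sum_eq_single i (fun j _ hj => by rw [hf j hj, sub_self, mul_zero]) (by simp)
  rw [← hdiff, ← sum_add_distrib]
  exact sum_congr rfl fun j _ => by ring

section Barycenter

variable {ι E : Type*} [Fintype ι] [NormedAddCommGroup E] [InnerProductSpace ℝ E]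
variable {A : ι → E} {p : ι → ℝ} {P : E}

lemma inner_sub_barycenter_eq_one_sub_inv (hpsum : ∑ j, p j = 1) (hP : P = ∑ j, p j • A j)
    {i : ι} (hpi : p i ≠ 0) {w : E} (hw : ∀ j, j ≠ i → ⟪A j - P, w⟫ = 1) :
    ⟪A i - P, w⟫ = 1 - 1 / p i := by
  have hzero : ∑ j, p j * ⟪A j - P, w⟫ = 0 := by
    simp only [← real_inner_smul_left, ← sum_inner, sum_smul_sub_of_sum_eq_one hpsum, ← hP,
      sub_self, inner_zero_left]
  rw [sum_mul_eq_of_forall_ne_eq_one i hw, hpsum] at hzero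
  field_simp
  linarith

lemma inner_sub_barycenter_sum_smul_poles (hpsum : ∑ j, p j = 1) (hP : P = ∑ j, p j • A j)
    (hp : ∀ i, p i ≠ 0) {Astar : ι → E}
    (hpole : ∀ i j, j ≠ i → ⟪A j - P, Astar i - P⟫ = 1)
    {z : ι → ℝ} (hzsum : ∑ i, z i = 1) (j : ι) :
    ⟪A j - P, ∑ i, z i • Astar i - P⟫ = 1 - z j / p j := by
  have hdiag := inner_sub_barycenter_eq_one_sub_inv hpsum hP (hp j) (hpole j)
  rw [← sum_smul_sub_of_sum_eq_one hzsum, inner_sum]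
  simp only [real_inner_smul_right]
  rw [sum_mul_eq_of_forall_ne_eq_one j fun i hi => hpole i j hi.symm, hzsum, hdiag]
  field_simp
  ring

end Barycenter

lemma affine_combination_eq_one_iff {p₀ p₁ z₀ z₁ : ℝ} (hp₀ : p₀ ≠ 0) (hp₁ : p₁ ≠ 0)
    (hz₀ : z₀ ≠ 0) (hz₁ : z₁ ≠ 0) (hne : p₀ / z₀ ≠ p₁ / z₁) (t : ℝ) :
    t * (1 - z₀ / p₀) + (1 - t) * (1 - z₁ / p₁) = 1 ↔ t = (p₀ / z₀) / (p₀ / z₀ - p₁ / z₁) := by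
  have hcross : p₀ * z₁ - z₀ * p₁ ≠ 0 := by
    intro h
    apply hne
    rw [div_eq_div_iff hz₀ hz₁]
    linarith
  have htarget : (p₀ / z₀) / (p₀ / z₀ - p₁ / z₁) = p₀ * z₁ / (p₀ * z₁ - z₀ * p₁) := by
    rw [div_sub_div _ _ hz₀ hz₁]
    field_simp
  rw [htarget, eq_div_iff hcross]
  constructor
  · intro h
    field_simp at h
    linear_combination h
  · intro h
    field_simp
    linear_combination h

theorem polar_hyperplane_meets_sideline_general (n : ℕ)
    (A : Fin (n + 1) → EuclideanSpace ℝ (Fin n))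
    (p : Fin (n + 1) → ℝ) (hp : ∀ i, p i ≠ 0) (hpsum : ∑ i, p i = 1)
    (P : EuclideanSpace ℝ (Fin n)) (hP : P = ∑ i, p i • A i)
    (Astar : Fin (n + 1) → EuclideanSpace ℝ (Fin n))
    (hpolar : ∀ i, (affineSpan ℝ (A '' {i}ᶜ) : Set (EuclideanSpace ℝ (Fin n))) =
      {R | inner ℝ (R - P) (Astar i - P) = (1 : ℝ)})
    (z : Fin (n + 1) → ℝ) (hzsum : ∑ i, z i = 1)
    (Zstar : EuclideanSpace ℝ (Fin n)) (hZ : Zstar = ∑ i, z i • Astar i)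
    (hz0 : z 0 ≠ 0) (hz1 : z 1 ≠ 0) (hne : p 0 / z 0 ≠ p 1 / z 1) :
    ∀ t : ℝ,
      inner ℝ ((t • A 0 + (1 - t) • A 1) - P) (Zstar - P) = (1 : ℝ) ↔
        t = (p 0 / z 0) / (p 0 / z 0 - p 1 / z 1) := by
  intro t
  have hpole : ∀ i j, j ≠ i → ⟪A j - P, Astar i - P⟫ = 1 := fun i j hji => by
    have hmem : A j ∈ affineSpan ℝ (A '' {i}ᶜ) := subset_affineSpan ℝ _ ⟨j, hji, rfl⟩
    rwa [← SetLike.mem_coe, hpolar i] at hmem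
  have hline : (t • A 0 + (1 - t) • A 1) - P = t • (A 0 - P) + (1 - t) • (A 1 - P) := by
    module
  rw [hline, inner_add_left, real_inner_smul_left, real_inner_smul_left, hZ,
    inner_sub_barycenter_sum_smul_poles hpsum hP hp hpole hzsum,
    inner_sub_barycenter_sum_smul_poles hpsum hP hp hpole hzsum]
  exact affine_combination_eq_one_iff (hp 0) (hp 1) hz0 hz1 hne t

/-- The polar hyperplane of `Z* = ∑ zᵢ* • Aᵢ*` with respect to the unit sphere
centered at `P` meets the line `A₁A₂` exactly at the point with homogeneous
barycentric coordinates `[p₁/z₁* : -p₂/z₂* : 0 : ⋯ : 0]`. -/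
theorem polar_hyperplane_meets_sideline (n : ℕ) (hn : 1 < n)
    (A : Fin (n + 1) → EuclideanSpace ℝ (Fin n)) (hA : AffineIndependent ℝ A)
    (p : Fin (n + 1) → ℝ) (hp : ∀ i, p i ≠ 0) (hpsum : ∑ i, p i = 1)
    (P : EuclideanSpace ℝ (Fin n)) (hP : P = ∑ i, p i • A i)
    (Astar : Fin (n + 1) → EuclideanSpace ℝ (Fin n))
    (hpolar : ∀ i, (affineSpan ℝ (A '' {i}ᶜ) : Set (EuclideanSpace ℝ (Fin n))) =
      {R | inner ℝ (R - P) (Astar i - P) = (1 : ℝ)})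
    (z : Fin (n + 1) → ℝ) (hzsum : ∑ i, z i = 1)
    (Zstar : EuclideanSpace ℝ (Fin n)) (hZ : Zstar = ∑ i, z i • Astar i)
    (hZP : Zstar ≠ P)
    (hz0 : z 0 ≠ 0) (hz1 : z 1 ≠ 0) (hne : p 0 / z 0 ≠ p 1 / z 1) :
    ∀ t : ℝ,
      inner ℝ ((t • A 0 + (1 - t) • A 1) - P) (Zstar - P) = (1 : ℝ) ↔
        t = (p 0 / z 0) / (p 0 / z 0 - p 1 / z 1) :=
  polar_hyperplane_meets_sideline_general n A p hp hpsum P hP Astar hpolar z hzsum Zstar hZ hz0 hz1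
    hne
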